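/- arXiv:2207.04999 — 3 statements merged into one kernel-verified Lean document; each statement's English description precedes it below -/
import Mathlib

section
/- Let $(\lambda_n)_{n\in\mathbb{N}}$ be a strictly increasing sequence of positive reals with $\lambda_n \to \infty$, and let $(a_n)$ be real numbers with $\sum_{n=1}^\infty |a_n/\lambda_n| < \infty$. If there exists a sequence $(\ell_k)_{k\in\mathbb{N}}$ of natural numbers with $\ell_k \to \infty$ such that $\sum_{n=1}^\infty a_n/\lambda_n^{\ell_k} = 0$ for all $k$, then $a_n = 0$ for all $n$. -/
/-!
Let `m` be the first index with `a m ≠ 0`. Multiplying the vanishing series by `λ_m ^ L` gives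
`∑ₙ aₙ (λ_m / λₙ) ^ L = 0` for `L = ℓ_k`. The terms with `n > m` tend to `0` as `L → ∞`, the term
`n = m` is the constant `a_m`, and all terms are dominated by `λ_m |aₙ / λₙ|`, so by dominated
convergence the sums tend to `a_m`, which is therefore `0`.
-/

open Filter Topology

namespace FirstNonzeroCoefficient

variable {lam a : ℕ → ℝ} {m : ℕ}

lemma tsum_mul_div_pow (c : ℝ) (L : ℕ) :
    ∑' n, a n * (c / lam n) ^ L = c ^ L * ∑' n, a n / lam n ^ L := by
  rw [← tsum_mul_left]
  congr 1 with n
  rw [div_pow]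
  ring

variable (hpos : ∀ n, 0 < lam n) (hmono : StrictMono lam) (hbelow : ∀ i < m, a i = 0)
include hpos hmono hbelow

lemma abs_mul_ratio_pow_le {L : ℕ} (hL : L ≠ 0) (n : ℕ) :
    |a n * (lam m / lam n) ^ L| ≤ lam m * |a n / lam n| := by
  rcases lt_or_ge n m with hnm | hmn
  · simp [hbelow n hnm]
  have hratio_le_one : lam m / lam n ≤ 1 :=
    (div_le_one (hpos n)).mpr (hmono.monotone hmn)
  have hratio_nonneg : 0 ≤ lam m / lam n := div_nonneg (hpos m).le (hpos n).le
  calc |a n * (lam m / lam n) ^ L| = |a n| * (lam m / lam n) ^ L := by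
        rw [abs_mul, abs_of_nonneg (pow_nonneg hratio_nonneg L)]
    _ ≤ |a n| * (lam m / lam n) :=
        mul_le_mul_of_nonneg_left (pow_le_of_le_one hratio_nonneg hratio_le_one hL) (abs_nonneg _)
    _ = lam m * |a n / lam n| := by
        rw [abs_div, abs_of_pos (hpos n)]
        ring

lemma tendsto_mul_ratio_pow (n : ℕ) :
    Tendsto (fun L : ℕ => a n * (lam m / lam n) ^ L) atTop
      (𝓝 (if n = m then a m else 0)) := by
  rcases lt_trichotomy n m with hnm | rfl | hmn
  · simp [hbelow n hnm, hnm.ne]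
  · simp [(hpos n).ne']
  · rw [if_neg hmn.ne', ← mul_zero (a n)]
    refine (tendsto_pow_atTop_nhds_zero_of_lt_one ?_ ?_).const_mul (a n)
    · exact div_nonneg (hpos m).le (hpos n).le
    · exact (div_lt_one (hpos n)).mpr (hmono hmn)

lemma tendsto_tsum_mul_ratio_pow (hsum : Summable fun n => |a n / lam n|) :
    Tendsto (fun L : ℕ => ∑' n, a n * (lam m / lam n) ^ L) atTop (𝓝 (a m)) := by
  have hlim := tendsto_tsum_of_dominated_convergence (hsum.mul_left (lam m))
    (tendsto_mul_ratio_pow hpos hmono hbelow)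
    (eventually_ne_atTop 0 |>.mono fun L hL => abs_mul_ratio_pow_le hpos hmono hbelow hL)
  rwa [tsum_ite_eq] at hlim

end FirstNonzeroCoefficient

open FirstNonzeroCoefficient in
theorem stmt_0_general (lam a : ℕ → ℝ) (hpos : ∀ n, 0 < lam n) (hmono : StrictMono lam)
    (hsum : Summable (fun n => |a n / lam n|))
    (ell : ℕ → ℕ) (hell : Filter.Tendsto ell Filter.atTop Filter.atTop)
    (hzero : ∀ k, ∑' n, a n / (lam n) ^ (ell k) = 0) :
    ∀ n, a n = 0 := by
  by_contra! hcon
  have hbelow : ∀ i < Nat.find hcon, a i = 0 := fun i hi => not_not.mp (Nat.find_min hcon hi)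
  have hlim := (tendsto_tsum_mul_ratio_pow hpos hmono hbelow hsum).comp hell
  have hsums_zero : ∀ k, ∑' n, a n * (lam (Nat.find hcon) / lam n) ^ ell k = 0 := fun k => by
    rw [tsum_mul_div_pow, hzero k, mul_zero]
  simp only [Function.comp_def, hsums_zero] at hlim
  exact Nat.find_spec hcon (tendsto_nhds_unique hlim tendsto_const_nhds)

theorem stmt_0 (lam a : ℕ → ℝ) (hpos : ∀ n, 0 < lam n) (hmono : StrictMono lam)
    (htend : Filter.Tendsto lam Filter.atTop Filter.atTop)
    (hsum : Summable (fun n => |a n / lam n|))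
    (ell : ℕ → ℕ) (hell : Filter.Tendsto ell Filter.atTop Filter.atTop)
    (hzero : ∀ k, ∑' n, a n / (lam n) ^ (ell k) = 0) :
    ∀ n, a n = 0 :=
  stmt_0_general lam a hpos hmono hsum ell hell hzero
end

section
/- Let $v : (0,\infty) \to \mathbb{R}$, and suppose there exist constants $a \in \mathbb{R}$, $\beta \in (0,1)$, $t_0 > 0$, and an integrable function $\mu$ on $(0,t_0)$ such that $v(t) = a + \frac{1}{\Gamma(\beta)}\int_0^{t_0}(t-s)^{\beta-1}\mu(s)\,ds$ for all $t > t_0$. If for every $p \in \mathbb{N}$ there exists $C(p) > 0$ with $|v(t)| \le C(p)/t^{p}$ as $t \to \infty$, then $a = 0$ and $\mu = 0$ almost everywhere on $(0,t_0)$. -/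
/-!
Substituting `s = t x` gives `∫ (t - s)^(β-1) μ(s) ds = t^(β-1) G(t)` with
`G(t) = ∫ (1 - s/t)^(β-1) μ(s) ds`. Expanding `(1 - x)^(β-1)` in its binomial series, whose
coefficients `c_k` are all positive since `β - 1 < 0`, yields
`G(t) = ∑_{k<m} c_k M_k t^(-k) + O(t^(-m))`, where `M_k` are the moments of `μ`.
For `m = 0` this says `G` is bounded, so the integral term tends to `0` and `a = lim v = 0`.
Then `G = Γ(β) t^(1-β) v` decays faster than every power of `t`, and the expansion forces
`M_0 = M_1 = ⋯ = 0` in turn. Vanishing moments mean `μ` integrates to zero against polynomials,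
hence, by Weierstrass, against all continuous functions, so `μ = 0` a.e.
-/

open MeasureTheory Filter Asymptotics Set Polynomial Topology

/-- The coefficient of `x ^ k` in the binomial series of `(1 - x) ^ γ`. -/
noncomputable def oneSubRpowCoeff (γ : ℝ) (k : ℕ) : ℝ :=
  (ascPochhammer ℝ k).eval (-γ) / k.factorial

theorem oneSubRpowCoeff_pos {γ : ℝ} (hγ : γ < 0) (k : ℕ) : 0 < oneSubRpowCoeff γ k :=
  div_pos (ascPochhammer_pos k _ (neg_pos.2 hγ)) (by positivity)

@[simp]
theorem oneSubRpowCoeff_zero (γ : ℝ) : oneSubRpowCoeff γ 0 = 1 := by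
  simp [oneSubRpowCoeff]

theorem succ_mul_oneSubRpowCoeff_succ (γ : ℝ) (k : ℕ) :
    (k + 1) * oneSubRpowCoeff γ (k + 1) = -γ * oneSubRpowCoeff (γ - 1) k := by
  simp only [oneSubRpowCoeff, ascPochhammer_succ_left, Nat.factorial_succ, eval_mul, eval_X,
    eval_comp, eval_add, eval_one, Nat.cast_mul, Nat.cast_succ, neg_sub]
  rw [neg_add_eq_sub]
  field_simp

theorem hasDerivAt_one_sub_rpow_sub_sum (γ : ℝ) (m : ℕ) {x : ℝ} (hx : x < 1) :
    HasDerivAt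
      (fun y => (1 - y) ^ γ - ∑ k ∈ Finset.range (m + 1), oneSubRpowCoeff γ k * y ^ k)
      (-γ * ((1 - x) ^ (γ - 1) - ∑ k ∈ Finset.range m, oneSubRpowCoeff (γ - 1) k * x ^ k))
      x := by
  have hpow : HasDerivAt (fun y => (1 - y) ^ γ) (-1 * γ * (1 - x) ^ (γ - 1)) x := by
    simpa using ((hasDerivAt_id x).const_sub 1).rpow_const (p := γ) (Or.inl (sub_pos.2 hx).ne')
  have hsum := HasDerivAt.fun_sum (u := Finset.range (m + 1)) fun k _ =>
    (hasDerivAt_pow k x).const_mul (oneSubRpowCoeff γ k)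
  refine (hpow.sub hsum).congr_deriv ?_
  rw [Finset.sum_range_succ']
  simp only [Nat.cast_add, Nat.cast_one, add_tsub_cancel_right, CharP.cast_eq_zero, zero_mul,
    mul_zero, add_zero, mul_sub, Finset.mul_sum]
  congr 1
  · ring
  · refine Finset.sum_congr rfl fun k _ => ?_
    rw [← mul_assoc (-γ), ← succ_mul_oneSubRpowCoeff_succ]
    ring

theorem exists_abs_one_sub_rpow_sub_sum_le (m : ℕ) :
    ∀ (γ : ℝ) {r : ℝ}, r < 1 → ∃ C, 0 ≤ C ∧ ∀ x ∈ Icc 0 r,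
      |(1 - x) ^ γ - ∑ k ∈ Finset.range m, oneSubRpowCoeff γ k * x ^ k| ≤ C * x ^ m := by
  induction m with
  | zero =>
    intro γ r hr
    have hcont : ContinuousOn (fun x : ℝ => (1 - x) ^ γ) (Icc 0 r) :=
      ContinuousOn.rpow_const (by fun_prop) fun x hx => Or.inl (by linarith [hx.2])
    obtain ⟨C, hC⟩ := isCompact_Icc.exists_bound_of_continuousOn hcont
    refine ⟨max C 0, le_max_right _ _, fun x hx => ?_⟩
    simpa using (hC x hx).trans (le_max_left C 0)
  | succ m ih =>
    intro γ r hr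
    obtain ⟨C, hC0, hC⟩ := ih (γ - 1) hr
    refine ⟨|γ| * C, by positivity, fun x hx => ?_⟩
    have hmvt := (convex_Icc 0 x).norm_image_sub_le_of_norm_hasDerivWithin_le
      (C := |γ| * C * x ^ m)
      (fun u hu =>
        (hasDerivAt_one_sub_rpow_sub_sum γ m (by linarith [hu.2, hx.2])).hasDerivWithinAt)
      (fun u hu => ?_) (left_mem_Icc.2 hx.1) (right_mem_Icc.2 hx.1)
    · simpa [Finset.sum_range_succ', abs_of_nonneg hx.1, pow_succ, mul_assoc] using hmvt
    · rw [Real.norm_eq_abs, abs_mul, abs_neg, mul_assoc]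
      gcongr
      exact (hC u ⟨hu.1, hu.2.trans hx.2⟩).trans (by gcongr; exacts [hu.1, hu.2])

theorem isBigO_inv_pow_of_abs_le {v : ℝ → ℝ} {C T : ℝ} {p : ℕ}
    (h : ∀ t, T ≤ t → |v t| ≤ C / t ^ (p : ℝ)) : v =O[atTop] fun t => (t ^ p)⁻¹ := by
  refine IsBigO.of_bound C ?_
  filter_upwards [eventually_ge_atTop T, eventually_gt_atTop 0] with t hT ht
  rw [Real.norm_eq_abs, norm_inv, norm_pow, Real.norm_of_nonneg ht.le, ← div_eq_mul_inv,
    ← Real.rpow_natCast]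
  exact h t hT

theorem isBigO_rpow_self_atTop {r : ℝ} (hr : r ≤ 1) :
    (fun t : ℝ => t ^ r) =O[atTop] fun t => t := by
  refine IsBigO.of_bound 1 ?_
  filter_upwards [eventually_ge_atTop 1] with t ht
  rw [one_mul, Real.norm_of_nonneg (by positivity), Real.norm_of_nonneg (by linarith)]
  simpa using Real.rpow_le_rpow_of_exponent_le ht hr

theorem eq_zero_of_isBigO_inv_pow_succ {c : ℝ} {m : ℕ}
    (h : (fun t : ℝ => c / t ^ m) =O[atTop] fun t => (t ^ (m + 1))⁻¹) : c = 0 := by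
  have hc : (fun _ : ℝ => c) =O[atTop] fun t : ℝ => t⁻¹ := by
    refine (h.mul (isBigO_refl (fun t : ℝ => t ^ m) atTop)).congr' ?_ ?_ <;>
      filter_upwards [eventually_gt_atTop 0] with t ht
    · field_simp
    · field_simp
      ring
  exact tendsto_const_nhds_iff.1 (hc.trans_tendsto tendsto_inv_atTop_zero)

section Moments

variable {μ : ℝ → ℝ} {a b : ℝ}

theorem MeasureTheory.IntegrableOn.continuousOn_mul_Ioc (hμ : IntegrableOn μ (Ioc a b))
    {g : ℝ → ℝ} (hg : ContinuousOn g (Icc a b)) :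
    IntegrableOn (fun s => g s * μ s) (Ioc a b) :=
  (((integrableOn_Icc_iff_integrableOn_Ioc).2 hμ).continuousOn_mul hg isCompact_Icc).mono_set
    Ioc_subset_Icc_self

theorem setIntegral_sum_pow_mul (hμ : IntegrableOn μ (Ioc a b)) (c : ℕ → ℝ) (n : ℕ) :
    ∫ s in Ioc a b, (∑ k ∈ Finset.range n, c k * s ^ k) * μ s
      = ∑ k ∈ Finset.range n, c k * ∫ s in Ioc a b, s ^ k * μ s := by
  simp_rw [Finset.sum_mul, mul_assoc]
  rw [integral_finsetSum _ fun k _ => (hμ.continuousOn_mul_Ioc (continuousOn_pow k)).const_mul _]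
  simp_rw [integral_const_mul]

theorem abs_setIntegral_mul_le (hμ : IntegrableOn μ (Ioc a b)) {g : ℝ → ℝ} {K : ℝ}
    (hK : ∀ s ∈ Ioc a b, |g s| ≤ K) :
    |∫ s in Ioc a b, g s * μ s| ≤ K * ∫ s in Ioc a b, |μ s| := by
  rw [← integral_const_mul]
  refine norm_integral_le_of_norm_le (f := fun s => g s * μ s) (hμ.abs.const_mul K) ?_
  filter_upwards [ae_restrict_mem measurableSet_Ioc] with s hs
  rw [Real.norm_eq_abs, abs_mul]
  exact mul_le_mul_of_nonneg_right (hK s hs) (abs_nonneg _)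

theorem setIntegral_mul_eq_zero_of_forall_integral_pow_mul_eq_zero
    (hμ : IntegrableOn μ (Ioc a b)) (h : ∀ k : ℕ, ∫ s in Ioc a b, s ^ k * μ s = 0)
    {g : ℝ → ℝ} (hg : ContinuousOn g (Icc a b)) : ∫ s in Ioc a b, g s * μ s = 0 := by
  have hpoly (P : ℝ[X]) : ∫ s in Ioc a b, P.eval s * μ s = 0 := by
    simp_rw [eval_eq_sum_range, setIntegral_sum_pow_mul hμ, h, mul_zero, Finset.sum_const_zero]
  have hε : ∀ ε > 0, |∫ s in Ioc a b, g s * μ s| ≤ ε * ∫ s in Ioc a b, |μ s| := by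
    intro ε hε
    obtain ⟨P, hP⟩ := exists_polynomial_near_of_continuousOn a b g hg ε hε
    have hgP : ∫ s in Ioc a b, g s * μ s = ∫ s in Ioc a b, (g s - P.eval s) * μ s := by
      simp_rw [sub_mul]
      rw [integral_sub (hμ.continuousOn_mul_Ioc hg)
        (hμ.continuousOn_mul_Ioc P.continuous.continuousOn), hpoly, sub_zero]
    rw [hgP]
    exact abs_setIntegral_mul_le hμ fun s hs => by
      simpa [abs_sub_comm] using (hP s (Ioc_subset_Icc_self hs)).le
  have hlim : Tendsto (fun ε : ℝ => ε * ∫ s in Ioc a b, |μ s|) (𝓝[>] 0) (𝓝 0) := by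
    simpa using ((tendsto_id (x := 𝓝 (0 : ℝ))).mul_const _).mono_left nhdsWithin_le_nhds
  exact abs_nonpos_iff.1 (ge_of_tendsto hlim (eventually_nhdsWithin_of_forall hε))

theorem ae_eq_zero_of_forall_integral_pow_mul_eq_zero (hμ : IntegrableOn μ (Ioc a b))
    (h : ∀ k : ℕ, ∫ s in Ioc a b, s ^ k * μ s = 0) :
    ∀ᵐ s ∂volume.restrict (Ioc a b), μ s = 0 :=
  ae_eq_zero_of_integral_contDiff_smul_eq_zero hμ.locallyIntegrable fun _ hg _ =>
    setIntegral_mul_eq_zero_of_forall_integral_pow_mul_eq_zero hμ h hg.continuous.continuousOn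

theorem setIntegral_sub_rpow_mul_eq (γ : ℝ) {t : ℝ} (ht : 0 < t) (hbt : b ≤ t) :
    ∫ s in Ioc a b, (t - s) ^ γ * μ s = t ^ γ * ∫ s in Ioc a b, (1 - s / t) ^ γ * μ s := by
  rw [← integral_const_mul]
  refine setIntegral_congr_fun measurableSet_Ioc fun s hs => ?_
  have hts : t - s = t * (1 - s / t) := by field_simp
  rw [hts, Real.mul_rpow ht.le (sub_nonneg.2 ((div_le_one ht).2 (hs.2.trans hbt))), mul_assoc]

theorem isBigO_setIntegral_one_sub_div_rpow_mul_sub_sum (hμ : IntegrableOn μ (Ioc 0 b))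
    (γ : ℝ) (m : ℕ) :
    (fun t => (∫ s in Ioc 0 b, (1 - s / t) ^ γ * μ s)
        - ∑ k ∈ Finset.range m, oneSubRpowCoeff γ k * (∫ s in Ioc 0 b, s ^ k * μ s) / t ^ k)
      =O[atTop] fun t => (t ^ m)⁻¹ := by
  obtain ⟨C, hC0, hC⟩ := exists_abs_one_sub_rpow_sub_sum_le m γ (r := 1 / 2) (by norm_num)
  refine IsBigO.of_bound (C * b ^ m * ∫ s in Ioc 0 b, |μ s|) ?_
  filter_upwards [eventually_gt_atTop 0, eventually_ge_atTop (2 * b)] with t ht hbt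
  have hmem : ∀ s ∈ Icc 0 b, s / t ∈ Icc 0 (1 / 2) := fun s hs =>
    ⟨div_nonneg hs.1 ht.le, by rw [div_le_iff₀ ht]; linarith [hs.2]⟩
  have hcont : ContinuousOn (fun s => (1 - s / t) ^ γ) (Icc 0 b) :=
    ContinuousOn.rpow_const (by fun_prop) fun s hs => Or.inl (by linarith [(hmem s hs).2])
  have hsum :
      ∑ k ∈ Finset.range m, oneSubRpowCoeff γ k * (∫ s in Ioc 0 b, s ^ k * μ s) / t ^ k
        = ∫ s in Ioc 0 b,
            (∑ k ∈ Finset.range m, oneSubRpowCoeff γ k * (s / t) ^ k) * μ s := by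
    rw [Finset.sum_congr rfl fun k _ => mul_div_right_comm _ _ (t ^ k),
      ← setIntegral_sum_pow_mul hμ]
    congr! 4 with s k
    ring
  rw [hsum, ← integral_sub (hμ.continuousOn_mul_Ioc hcont)
    (hμ.continuousOn_mul_Ioc (by fun_prop)), norm_inv, norm_pow, Real.norm_of_nonneg ht.le]
  calc _ = |∫ s in Ioc 0 b, ((1 - s / t) ^ γ
          - ∑ k ∈ Finset.range m, oneSubRpowCoeff γ k * (s / t) ^ k) * μ s| := by
        simp only [Real.norm_eq_abs, sub_mul]
    _ ≤ C * (b / t) ^ m * ∫ s in Ioc 0 b, |μ s| :=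
        abs_setIntegral_mul_le hμ fun s hs => (hC _ (hmem s (Ioc_subset_Icc_self hs))).trans <| by
          gcongr
          exacts [div_nonneg hs.1.le ht.le, hs.2]
    _ = C * b ^ m * (∫ s in Ioc 0 b, |μ s|) * (t ^ m)⁻¹ := by rw [div_pow]; ring

theorem setIntegral_pow_mul_eq_zero_of_isBigO {γ : ℝ} (hμ : IntegrableOn μ (Ioc 0 b))
    (hγ : γ < 0)
    (h : ∀ m : ℕ, (fun t => ∫ s in Ioc 0 b, (1 - s / t) ^ γ * μ s) =O[atTop]
      fun t => (t ^ (m + 1))⁻¹)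
    (m : ℕ) : ∫ s in Ioc 0 b, s ^ m * μ s = 0 := by
  induction m using Nat.strong_induction_on with
  | _ m ih =>
  have hlow (t : ℝ) :
      ∑ k ∈ Finset.range m, oneSubRpowCoeff γ k * (∫ s in Ioc 0 b, s ^ k * μ s) / t ^ k
        = 0 :=
    Finset.sum_eq_zero fun k hk => by rw [ih k (Finset.mem_range.1 hk)]; simp
  have hm := (h m).sub (isBigO_setIntegral_one_sub_div_rpow_mul_sub_sum hμ γ (m + 1))
  simp only [Finset.sum_range_succ, hlow, zero_add, sub_sub_cancel] at hm
  exact (mul_eq_zero.1 (eq_zero_of_isBigO_inv_pow_succ hm)).resolve_left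
    (oneSubRpowCoeff_pos hγ m).ne'

end Moments

theorem stmt_9_general (v : ℝ → ℝ) (a t₀ β : ℝ)
    (hβ : β ∈ Set.Ioo (0:ℝ) 1) (μ : ℝ → ℝ) (hint : IntegrableOn μ (Set.Ioc 0 t₀))
    (hrep : ∀ t, t₀ < t →
      v t = a + (1 / Real.Gamma β) * ∫ s in Set.Ioc 0 t₀, (t - s) ^ (β - 1) * μ s)
    (hdecay : ∀ p : ℕ, 0 < p → ∃ C > 0, ∃ T, ∀ t, T ≤ t → |v t| ≤ C / t ^ (p : ℝ)) :
    a = 0 ∧ ∀ᵐ s ∂(volume.restrict (Set.Ioc 0 t₀)), μ s = 0 := by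
  obtain ⟨hβ0, hβ1⟩ := hβ
  set G : ℝ → ℝ := fun t => ∫ s in Ioc 0 t₀, (1 - s / t) ^ (β - 1) * μ s
  have hvG : ∀ᶠ t in atTop, v t = a + 1 / Real.Gamma β * (t ^ (β - 1) * G t) := by
    filter_upwards [eventually_gt_atTop t₀, eventually_gt_atTop 0] with t ht ht0
    rw [hrep t ht, setIntegral_sub_rpow_mul_eq _ ht0 ht.le]
  have hv (p : ℕ) : v =O[atTop] fun t => (t ^ (p + 1))⁻¹ := by
    obtain ⟨C, -, T, hT⟩ := hdecay (p + 1) p.succ_pos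
    exact isBigO_inv_pow_of_abs_le hT
  have ha : a = 0 := by
    have hG : G =O[atTop] fun _ => (1 : ℝ) := by
      simpa using isBigO_setIntegral_one_sub_div_rpow_mul_sub_sum hint (β - 1) 0
    have hF : Tendsto (fun t => t ^ (β - 1) * G t) atTop (𝓝 0) := by
      refine ((isBigO_refl _ _).mul hG).trans_tendsto ?_
      simpa using tendsto_rpow_neg_atTop (by linarith : 0 < 1 - β)
    have hva : Tendsto v atTop (𝓝 a) := by
      simpa using (tendsto_const_nhds.add (hF.const_mul _)).congr' (hvG.mono fun t ht => ht.symm)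
    exact tendsto_nhds_unique hva ((hv 0).trans_tendsto (by simpa using tendsto_inv_atTop_zero))
  have hGdecay (m : ℕ) : G =O[atTop] fun t => (t ^ (m + 1))⁻¹ := by
    refine (((isBigO_rpow_self_atTop (by linarith : 1 - β ≤ 1)).mul (hv (m + 1))).const_mul_left
      (Real.Gamma β)).congr' ?_ ?_ <;> filter_upwards [hvG, eventually_gt_atTop 0] with t ht ht0
    · have hpow_mul : t ^ (1 - β) * t ^ (β - 1) = 1 := by
        rw [← Real.rpow_add ht0, sub_add_sub_cancel', sub_self, Real.rpow_zero]
      rw [ht, ha, zero_add]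
      field_simp [(Real.Gamma_pos_of_pos hβ0).ne']
      linear_combination G t * hpow_mul
    · field_simp
      ring
  exact ⟨ha, ae_eq_zero_of_forall_integral_pow_mul_eq_zero hint
    (setIntegral_pow_mul_eq_zero_of_isBigO hint (by linarith) hGdecay)⟩

theorem stmt_9 (v : ℝ → ℝ) (a t₀ β : ℝ) (ht₀ : 0 < t₀)
    (hβ : β ∈ Set.Ioo (0:ℝ) 1) (μ : ℝ → ℝ) (hint : IntegrableOn μ (Set.Ioc 0 t₀))
    (hrep : ∀ t, t₀ < t →
      v t = a + (1 / Real.Gamma β) * ∫ s in Set.Ioc 0 t₀, (t - s) ^ (β - 1) * μ s)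
    (hdecay : ∀ p : ℕ, 0 < p → ∃ C > 0, ∃ T, ∀ t, T ≤ t → |v t| ≤ C / t ^ (p : ℝ)) :
    a = 0 ∧ ∀ᵐ s ∂(volume.restrict (Set.Ioc 0 t₀)), μ s = 0 :=
  stmt_9_general v a t₀ β hβ μ hint hrep hdecay
end

section
/- Let $a \in \mathbb{R}$, $t_0 > 0$, $\beta \in (0,1)$, and $\mu \in L^1(0, t_0)$, and define $v(t) = a + \frac{1}{\Gamma(\beta)}\int_0^{t_0}(t-s)^{\beta-1}\mu(s)\,ds$ for $t > t_0$. If $v(t) = 0$ for all $t > t_0$, then $a = 0$ and $\mu = 0$ almost everywhere on $(0, t_0)$. -/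
/-!
Differentiating `t ↦ ∫ (t - s) ^ γ * μ s` under the integral sign lowers the exponent by one and
multiplies by `γ`, which never vanishes for `γ = β - 1 - n`. So if the Riemann–Liouville integral
is constant on `t > t₀`, all the integrals `∫ (t - s) ^ (β - 2 - n) * μ s` vanish there. For one
fixed `t > t₀` this says that `(t - s) ^ (β - 2) * μ s` is orthogonal to every polynomial in
`(t - s)⁻¹`. As `s ↦ (t - s)⁻¹` maps `[0, t₀]` homeomorphically onto an interval, the Weierstrass
theorem makes these polynomials uniformly dense among continuous functions of `s`, so `μ = 0`
almost everywhere, and then `a = 0`.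
-/

open MeasureTheory Set

section

variable {α : Type*} [MeasurableSpace α] {ν : Measure α} {f g : α → ℝ}

lemma integral_mul_eq_zero_of_forall_approx (hf : Integrable f ν)
    (hg : Integrable (fun x => g x * f x) ν)
    (happrox : ∀ ε > 0, ∃ φ : α → ℝ, Integrable (fun x => φ x * f x) ν ∧
      ∫ x, φ x * f x ∂ν = 0 ∧ ∀ᵐ x ∂ν, |g x - φ x| ≤ ε) :
    ∫ x, g x * f x ∂ν = 0 := by
  set N := ∫ x, ‖f x‖ ∂ν
  have hN : 0 ≤ N := integral_nonneg fun x => norm_nonneg _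
  refine abs_eq_zero.1 (le_antisymm (le_of_forall_pos_le_add fun ε hε => ?_) (abs_nonneg _))
  obtain ⟨φ, hφ, hφ0, hgφ⟩ := happrox (ε / (N + 1)) (by positivity)
  have hdiff : ∫ x, g x * f x ∂ν = ∫ x, (g x - φ x) * f x ∂ν := by
    simp only [sub_mul]
    rw [integral_sub hg hφ, hφ0, sub_zero]
  calc |∫ x, g x * f x ∂ν| = ‖∫ x, (g x - φ x) * f x ∂ν‖ := by rw [hdiff, Real.norm_eq_abs]
    _ ≤ ∫ x, ε / (N + 1) * ‖f x‖ ∂ν := by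
        refine norm_integral_le_of_norm_le (hf.norm.const_mul _) ?_
        filter_upwards [hgφ] with x hx
        rw [norm_mul, Real.norm_eq_abs]
        exact mul_le_mul_of_nonneg_right hx (norm_nonneg _)
    _ = ε / (N + 1) * N := integral_const_mul _ _
    _ ≤ 0 + ε := by
        rw [zero_add, div_mul_eq_mul_div, div_le_iff₀ (by positivity)]
        nlinarith

end

noncomputable def kernelIntegral (f : ℝ → ℝ) (a b γ t : ℝ) : ℝ :=
  ∫ s in Ioc a b, (t - s) ^ γ * f s

section

variable {f : ℝ → ℝ} {a b t : ℝ}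

lemma integrableOn_sub_rpow_mul (hf : IntegrableOn f (Ioc a b)) (ht : b < t) (γ : ℝ) :
    IntegrableOn (fun s => (t - s) ^ γ * f s) (Ioc a b) :=
  hf.continuousOn_mul_of_subset
    (ContinuousOn.rpow_const (f := fun s => t - s) (by fun_prop) fun s hs =>
      Or.inl (by linarith [hs.2]))
    isCompact_Icc measurableSet_Ioc Ioc_subset_Icc_self

lemma hasDerivAt_kernelIntegral (hf : IntegrableOn f (Ioc a b)) (ht : b < t) (γ : ℝ) :
    HasDerivAt (kernelIntegral f a b γ) (γ * kernelIntegral f a b (γ - 1) t) t := by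
  set ε := (t - b) / 2 with hε_def
  have hε : 0 < ε := by linarith
  have hgap : ∀ x ∈ Metric.ball t ε, ∀ s ∈ Ioc a b, x - s ∈ Icc ε (t + ε - a) := by
    intro x hx s hs
    rw [Metric.mem_ball, Real.dist_eq, abs_lt] at hx
    constructor <;> linarith [hs.1, hs.2]
  obtain ⟨C, hC⟩ := isCompact_Icc.exists_bound_of_continuousOn
    (f := fun y : ℝ => γ * y ^ (γ - 1)) (s := Icc ε (t + ε - a))
    (continuousOn_const.mul (ContinuousOn.rpow_const (f := fun y => y) continuousOn_id
      fun y hy => Or.inl (by linarith [hy.1])))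
  have key := hasDerivAt_integral_of_dominated_loc_of_deriv_le
    (μ := volume.restrict (Ioc a b)) (F := fun x s => (x - s) ^ γ * f s)
    (F' := fun x s => γ * (x - s) ^ (γ - 1) * f s) (bound := fun s => C * ‖f s‖)
    (Metric.ball_mem_nhds t hε) ?_ (integrableOn_sub_rpow_mul hf ht γ) ?_ ?_
    (hf.norm.const_mul C) ?_
  · have h := key.2
    simp only [mul_assoc, integral_const_mul] at h
    exact h
  · filter_upwards [Ioi_mem_nhds ht] with x hx
    exact (integrableOn_sub_rpow_mul hf hx γ).aestronglyMeasurable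
  · simpa only [mul_assoc] using
      ((integrableOn_sub_rpow_mul hf ht (γ - 1)).const_mul γ).aestronglyMeasurable
  · refine ae_restrict_of_forall_mem measurableSet_Ioc fun s hs x hx => ?_
    rw [norm_mul]
    exact mul_le_mul_of_nonneg_right (hC _ (hgap x hx s hs)) (norm_nonneg _)
  · refine ae_restrict_of_forall_mem measurableSet_Ioc fun s hs x hx => ?_
    have hpos : 0 < x - s := hε.trans_le (hgap x hx s hs).1
    simpa using ((Real.hasDerivAt_rpow_const (Or.inl hpos.ne')).comp x
      ((hasDerivAt_id x).sub_const s)).mul_const (f s)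

lemma kernelIntegral_sub_one_eqOn_zero (hf : IntegrableOn f (Ioc a b)) {γ c : ℝ} (hγ : γ ≠ 0)
    (h : EqOn (kernelIntegral f a b γ) (fun _ => c) (Ioi b)) :
    EqOn (kernelIntegral f a b (γ - 1)) 0 (Ioi b) := by
  intro t ht
  have hconst : HasDerivAt (kernelIntegral f a b γ) 0 t :=
    (hasDerivAt_const t c).congr_of_eventuallyEq (h.eventuallyEq_of_mem (Ioi_mem_nhds ht))
  have := (hasDerivAt_kernelIntegral hf ht γ).unique hconst
  exact (mul_eq_zero.1 this).resolve_left hγ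

lemma kernelIntegral_sub_nat_eqOn_zero (hf : IntegrableOn f (Ioc a b)) {γ c : ℝ}
    (hγ : ∀ n : ℕ, γ ≠ n) (h : EqOn (kernelIntegral f a b γ) (fun _ => c) (Ioi b)) (n : ℕ) :
    EqOn (kernelIntegral f a b (γ - 1 - n)) 0 (Ioi b) := by
  induction n with
  | zero => simpa using kernelIntegral_sub_one_eqOn_zero hf (by simpa using hγ 0) h
  | succ n ih =>
    have hn : γ - 1 - n ≠ 0 := fun h0 => hγ (n + 1) (by push_cast; linarith)
    rw [Nat.cast_succ, sub_add_eq_sub_sub]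
    exact kernelIntegral_sub_one_eqOn_zero hf hn ih

lemma integral_continuous_mul_eq_zero_of_integral_inv_sub_pow_mul_eq_zero
    (hf : IntegrableOn f (Ioc a b)) (ht : b < t)
    (h : ∀ n : ℕ, ∫ s in Ioc a b, (t - s)⁻¹ ^ n * f s = 0) {g : ℝ → ℝ} (hg : Continuous g) :
    ∫ s in Ioc a b, g s * f s = 0 := by
  -- `min a b` rather than `a` keeps the interval of values of `(t - s)⁻¹` inside `(0, ∞)` also
  -- when `Ioc a b` is empty.
  have hinv : ∀ s ∈ Ioc a b, (t - s)⁻¹ ∈ Icc (t - min a b)⁻¹ (t - b)⁻¹ := fun s hs =>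
    ⟨inv_anti₀ (by linarith [hs.2]) (by linarith [hs.1, min_le_left a b]),
      inv_anti₀ (by linarith) (by linarith [hs.2])⟩
  refine integral_mul_eq_zero_of_forall_approx hf
    (hf.continuousOn_mul_of_subset hg.continuousOn isCompact_Icc measurableSet_Ioc
      Ioc_subset_Icc_self) fun ε hε => ?_
  obtain ⟨p, hp⟩ := exists_polynomial_near_of_continuousOn (t - min a b)⁻¹ (t - b)⁻¹
    (fun x => g (t - x⁻¹)) (by
      refine hg.comp_continuousOn (continuousOn_const.sub (continuousOn_inv₀.mono ?_))
      intro x hx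
      exact (inv_pos.2 (by linarith [min_le_right a b])).trans_le hx.1 |>.ne') ε hε
  have hφf : ∀ n : ℕ, IntegrableOn (fun s => (t - s)⁻¹ ^ n * f s) (Ioc a b) := fun n =>
    hf.continuousOn_mul_of_subset (ContinuousOn.pow (ContinuousOn.inv₀ (by fun_prop)
      fun s hs => by linarith [hs.2]) n) isCompact_Icc measurableSet_Ioc Ioc_subset_Icc_self
  refine ⟨fun s => p.eval (t - s)⁻¹, ?_, ?_, ?_⟩
  · simp only [Polynomial.eval_eq_sum_range, Finset.sum_mul, mul_assoc]
    exact integrable_finsetSum _ fun n _ => (hφf n).const_mul _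
  · simp only [Polynomial.eval_eq_sum_range, Finset.sum_mul, mul_assoc]
    rw [integral_finsetSum _ fun n _ => (hφf n).const_mul _]
    exact Finset.sum_eq_zero fun n _ => by rw [integral_const_mul, h n, mul_zero]
  · refine ae_restrict_of_forall_mem measurableSet_Ioc fun s hs => ?_
    have := hp _ (hinv s hs)
    rw [inv_inv, sub_sub_cancel, abs_sub_comm] at this
    exact this.le

lemma ae_eq_zero_of_integral_inv_sub_pow_mul_eq_zero (hf : IntegrableOn f (Ioc a b)) (ht : b < t)
    (h : ∀ n : ℕ, ∫ s in Ioc a b, (t - s)⁻¹ ^ n * f s = 0) :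
    ∀ᵐ s ∂volume.restrict (Ioc a b), f s = 0 :=
  ae_eq_zero_of_integral_contDiff_smul_eq_zero hf.locallyIntegrable fun _ hg _ =>
    integral_continuous_mul_eq_zero_of_integral_inv_sub_pow_mul_eq_zero hf ht h hg.continuous

lemma ae_eq_zero_of_kernelIntegral_sub_nat_eq_zero (hf : IntegrableOn f (Ioc a b)) (ht : b < t)
    {γ : ℝ} (h : ∀ n : ℕ, kernelIntegral f a b (γ - n) t = 0) :
    ∀ᵐ s ∂volume.restrict (Ioc a b), f s = 0 := by
  have hweighted := ae_eq_zero_of_integral_inv_sub_pow_mul_eq_zero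
    (integrableOn_sub_rpow_mul hf ht γ) ht fun n => by
      rw [← h n, kernelIntegral]
      refine setIntegral_congr_fun measurableSet_Ioc fun s hs => ?_
      rw [Real.rpow_sub_natCast (by linarith [hs.2]), inv_pow]
      ring
  filter_upwards [hweighted, ae_restrict_mem measurableSet_Ioc] with s hs hmem
  exact (mul_eq_zero.1 hs).resolve_left (Real.rpow_pos_of_pos (by linarith [hmem.2]) γ).ne'

end

theorem stmt_15_general (a t₀ β : ℝ) (hβ : β ∈ Set.Ioo (0:ℝ) 1)
    (μ : ℝ → ℝ) (hμ : IntegrableOn μ (Set.Ioc 0 t₀))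
    (hvanish : ∀ t, t₀ < t →
      a + (1 / Real.Gamma β) * ∫ s in Set.Ioc 0 t₀, (t - s) ^ (β - 1) * μ s = 0) :
    a = 0 ∧ ∀ᵐ s ∂(volume.restrict (Set.Ioc 0 t₀)), μ s = 0 := by
  obtain ⟨hβ0, hβ1⟩ := hβ
  have hΓ : Real.Gamma β ≠ 0 := (Real.Gamma_pos_of_pos hβ0).ne'
  have hconst : EqOn (kernelIntegral μ 0 t₀ (β - 1)) (fun _ => -a * Real.Gamma β) (Ioi t₀) :=
    fun t ht => by
      have := hvanish t ht
      rw [kernelIntegral]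
      field_simp at this ⊢
      linarith
  have hzero := kernelIntegral_sub_nat_eqOn_zero hμ
    (fun n => by linarith [(Nat.cast_nonneg n : (0 : ℝ) ≤ n)]) hconst
  have hae := ae_eq_zero_of_kernelIntegral_sub_nat_eq_zero hμ (lt_add_one t₀)
    fun n => hzero n (lt_add_one t₀)
  refine ⟨?_, hae⟩
  have := hvanish (t₀ + 1) (lt_add_one t₀)
  rwa [integral_eq_zero_of_ae (by filter_upwards [hae] with s hs; simp [hs]), mul_zero,
    add_zero] at this

theorem stmt_15 (a t₀ β : ℝ) (ht₀ : 0 < t₀) (hβ : β ∈ Set.Ioo (0:ℝ) 1)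
    (μ : ℝ → ℝ) (hμ : IntegrableOn μ (Set.Ioc 0 t₀))
    (hvanish : ∀ t, t₀ < t →
      a + (1 / Real.Gamma β) * ∫ s in Set.Ioc 0 t₀, (t - s) ^ (β - 1) * μ s = 0) :
    a = 0 ∧ ∀ᵐ s ∂(volume.restrict (Set.Ioc 0 t₀)), μ s = 0 :=
  stmt_15_general a t₀ β hβ μ hμ hvanish
end
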